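/- Let E be a real Banach space and let F, G ⊆ E* be weak-star closed linear subspaces of the continuous dual such that F is finite-dimensional and E* = F ⊕ G. Then the pre-annihilator G₀ ⊆ E is finite-dimensional with dim(G₀) = dim(F), and moreover (F₀)⁰ = F and (G₀)⁰ = G, where for a subspace W ⊆ E we write W⁰ = {ℓ ∈ E* : ℓ(w) = 0 for all w ∈ W}. -/

import Mathlib

/-!
Separating a functional `ℓ ∉ H` from the weak-star closed subspace `H` by Hahn–Banach in
`WeakDual ℝ E`, and using that every weak-star continuous functional on `E*` is evaluation at a
point of `E`, gives the bipolar identity `(H₀)⁰ = H`. The pairing `F × G₀ → ℝ` is then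
nondegenerate: an `f ∈ F` vanishing on `G₀` lies in `(G₀)⁰ ∩ F = G ∩ F = 0`, and an `x ∈ G₀`
killed by `F` is killed by `F + G = E*`, so `x = 0`. Hence `G₀ ≅ F*`.
-/

open NormedSpace

noncomputable section

/-- The annihilator of a subspace `W ⊆ E` in the continuous dual `E*`. -/
def ann {E : Type*} [NormedAddCommGroup E] [NormedSpace ℝ E]
    (W : Submodule ℝ E) : Submodule ℝ (StrongDual ℝ E) where
  carrier := {ℓ | ∀ w ∈ W, ℓ w = 0}
  add_mem' := by
    intro a b ha hb w hw
    simp [ha w hw, hb w hw]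
  zero_mem' := by
    intro w hw
    simp
  smul_mem' := by
    intro c ℓ hℓ w hw
    simp [hℓ w hw]

/-- The pre-annihilator of a subspace `H ⊆ E*` in `E`. -/
def preAnn {E : Type*} [NormedAddCommGroup E] [NormedSpace ℝ E]
    (H : Submodule ℝ (StrongDual ℝ E)) : Submodule ℝ E where
  carrier := {x | ∀ ℓ ∈ H, ℓ x = 0}
  add_mem' := by
    intro a b ha hb ℓ hℓ
    simp [ha ℓ hℓ, hb ℓ hℓ]
  zero_mem' := by
    intro ℓ hℓ
    simp
  smul_mem' := by
    intro c x hx ℓ hℓ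
    simp [hx ℓ hℓ]

/-- A subspace of the continuous dual is weak-star closed if its image in `WeakDual ℝ E`
(the dual with the topology of pointwise convergence on `E`) is closed. -/
def IsWeakStarClosed {E : Type*} [NormedAddCommGroup E] [NormedSpace ℝ E]
    (H : Submodule ℝ (StrongDual ℝ E)) : Prop :=
  IsClosed (StrongDual.toWeakDual '' (H : Set (StrongDual ℝ E)))

/-- The relative projection constant of a subspace `W` of a normed space `Y`:
the infimum of the operator norms of continuous linear projections of `Y` onto `W`. -/
def relProjConst {Y : Type*} [NormedAddCommGroup Y] [NormedSpace ℝ Y]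
    (W : Submodule ℝ Y) : ℝ :=
  sInf {c | ∃ P : Y →L[ℝ] Y, P.comp P = P ∧ LinearMap.range (P : Y →ₗ[ℝ] Y) = W ∧ ‖P‖ = c}

end

theorem Submodule.apply_eq_zero_of_forall_apply_lt {M : Type*} [AddCommGroup M] [Module ℝ M]
    {p : Submodule ℝ M} {f : M →ₗ[ℝ] ℝ} {u : ℝ} (h : ∀ x ∈ p, f x < u) {x : M} (hx : x ∈ p) :
    f x = 0 := by
  by_contra hfx
  have := h ((u / f x) • x) (p.smul_mem _ hx)
  rw [f.map_smul, smul_eq_mul, div_mul_cancel₀ u hfx] at this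
  exact this.false

theorem Submodule.exists_strongDual_ne_zero_of_notMem {V : Type*} [AddCommGroup V] [Module ℝ V]
    [TopologicalSpace V] [IsTopologicalAddGroup V] [ContinuousSMul ℝ V] [LocallyConvexSpace ℝ V]
    {p : Submodule ℝ V} (hp : IsClosed (p : Set V)) {v : V} (hv : v ∉ p) :
    ∃ f : StrongDual ℝ V, f v ≠ 0 ∧ ∀ x ∈ p, f x = 0 := by
  obtain ⟨f, u, hfp, hfv⟩ := geometric_hahn_banach_closed_point p.convex hp hv
  have hu : 0 < u := by simpa using hfp 0 p.zero_mem
  exact ⟨f, (hu.trans hfv).ne', fun x hx => p.apply_eq_zero_of_forall_apply_lt hfp hx⟩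

instance WeakDual.instLocallyConvexSpace {E : Type*} [NormedAddCommGroup E] [NormedSpace ℝ E] :
    LocallyConvexSpace ℝ (WeakDual ℝ E) :=
  WeakBilin.locallyConvexSpace

theorem WeakDual.exists_eq_apply {E : Type*} [NormedAddCommGroup E] [NormedSpace ℝ E]
    (φ : StrongDual ℝ (WeakDual ℝ E)) : ∃ x : E, ∀ ℓ : WeakDual ℝ E, φ ℓ = ℓ x := by
  obtain ⟨x, rfl⟩ := LinearMap.dualEmbedding_surjective (topDualPairing ℝ E) φ
  exact ⟨x, fun ℓ => rfl⟩

theorem LinearMap.finiteDimensional_and_finrank_eq_of_injective_flip {K M N : Type*} [Field K]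
    [AddCommGroup M] [Module K M] [AddCommGroup N] [Module K N] [FiniteDimensional K M]
    {p : M →ₗ[K] N →ₗ[K] K} (hp : Function.Injective p) (hp' : Function.Injective p.flip) :
    FiniteDimensional K N ∧ Module.finrank K N = Module.finrank K M := by
  have := IsPerfPair.of_injective hp hp'
  exact ⟨.of_injective p.flip hp', (Module.finrank_of_isPerfPair p).symm⟩

section Annihilators

variable {E : Type*} [NormedAddCommGroup E] [NormedSpace ℝ E]

theorem exists_mem_preAnn_ne_zero_of_notMem {H : Submodule ℝ (StrongDual ℝ E)}
    (hH : IsWeakStarClosed H) {ℓ : StrongDual ℝ E} (hℓ : ℓ ∉ H) :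
    ∃ x ∈ preAnn H, ℓ x ≠ 0 := by
  let H' : Submodule ℝ (WeakDual ℝ E) := H.map StrongDual.toWeakDual.toLinearMap
  have hH' : IsClosed (H' : Set (WeakDual ℝ E)) := by rwa [Submodule.map_coe]
  obtain ⟨φ, hφℓ, hφH⟩ := H'.exists_strongDual_ne_zero_of_notMem hH'
    (v := StrongDual.toWeakDual ℓ) (by simpa [H'] using hℓ)
  obtain ⟨x, hx⟩ := WeakDual.exists_eq_apply φ
  exact ⟨x, fun m hm => hx m ▸ hφH _ (Submodule.mem_map_of_mem hm), hx ℓ ▸ hφℓ⟩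

theorem ann_preAnn_of_isWeakStarClosed {H : Submodule ℝ (StrongDual ℝ E)}
    (hH : IsWeakStarClosed H) : ann (preAnn H) = H := by
  refine le_antisymm (fun ℓ hℓ => ?_) fun ℓ hℓ x hx => hx ℓ hℓ
  by_contra hℓH
  obtain ⟨x, hx, hℓx⟩ := exists_mem_preAnn_ne_zero_of_notMem hH hℓH
  exact hℓx (hℓ x hx)

theorem topDualPairing_domRestrict₁₂_flip_injective {F G : Submodule ℝ (StrongDual ℝ E)}
    (hsup : F ⊔ G = ⊤) :
    Function.Injective ((topDualPairing ℝ E).domRestrict₁₂ F (preAnn G)).flip := by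
  rw [injective_iff_map_eq_zero]
  intro x hx
  refine Subtype.ext <| SeparatingDual.eq_zero_of_forall_dual_eq_zero (R := ℝ) fun ℓ => ?_
  obtain ⟨f, hf, g, hg, rfl⟩ := Submodule.mem_sup.mp (hsup ▸ Submodule.mem_top (x := ℓ))
  have hfx : f x = 0 := LinearMap.congr_fun hx ⟨f, hf⟩
  simp [hfx, x.2 g hg]

theorem topDualPairing_domRestrict₁₂_injective {F G : Submodule ℝ (StrongDual ℝ E)}
    (hG : ann (preAnn G) = G) (hinf : F ⊓ G = ⊥) :
    Function.Injective ((topDualPairing ℝ E).domRestrict₁₂ F (preAnn G)) := by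
  rw [injective_iff_map_eq_zero]
  intro f hf
  have hfG : (f : StrongDual ℝ E) ∈ G := hG ▸ fun x hx => LinearMap.congr_fun hf ⟨x, hx⟩
  simpa [hinf] using Submodule.mem_inf.mpr ⟨f.2, hfG⟩

end Annihilators

theorem preAnn_finrank_and_ann_general (E : Type*) [NormedAddCommGroup E] [NormedSpace ℝ E]
    (F G : Submodule ℝ (StrongDual ℝ E))
    (hFc : IsWeakStarClosed F) (hGc : IsWeakStarClosed G)
    (hFfd : FiniteDimensional ℝ F)
    (hinf : F ⊓ G = ⊥) (hsup : F ⊔ G = ⊤) :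
    FiniteDimensional ℝ (preAnn G) ∧
      Module.finrank ℝ (preAnn G) = Module.finrank ℝ F ∧
      ann (preAnn F) = F ∧ ann (preAnn G) = G := by
  have := hFfd
  have hG := ann_preAnn_of_isWeakStarClosed hGc
  obtain ⟨hfd, hrank⟩ :=
    LinearMap.finiteDimensional_and_finrank_eq_of_injective_flip (M := F) (N := preAnn G)
      (topDualPairing_domRestrict₁₂_injective hG hinf)
      (topDualPairing_domRestrict₁₂_flip_injective hsup)
  exact ⟨hfd, hrank, ann_preAnn_of_isWeakStarClosed hFc, hG⟩

/-- If `F, G ⊆ E*` are weak-star closed subspaces with `F` finite-dimensional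
and `E* = F ⊕ G`, then `G₀` is finite-dimensional with `dim G₀ = dim F`, and
`(F₀)⁰ = F` and `(G₀)⁰ = G`. -/
theorem preAnn_finrank_and_ann (E : Type*) [NormedAddCommGroup E] [NormedSpace ℝ E]
    [CompleteSpace E] (F G : Submodule ℝ (StrongDual ℝ E))
    (hFc : IsWeakStarClosed F) (hGc : IsWeakStarClosed G)
    (hFfd : FiniteDimensional ℝ F)
    (hinf : F ⊓ G = ⊥) (hsup : F ⊔ G = ⊤) :
    FiniteDimensional ℝ (preAnn G) ∧
      Module.finrank ℝ (preAnn G) = Module.finrank ℝ F ∧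
      ann (preAnn F) = F ∧ ann (preAnn G) = G :=
  preAnn_finrank_and_ann_general E F G hFc hGc hFfd hinf hsup
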